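/- arXiv:1711.08530 — 2 statements merged into one kernel-verified Lean document; each statement's English description precedes it below -/
import Mathlib

section
/- The full KS map on cotangent vectors is invariant under the simultaneous S¹-action: for nonzero quaternion q, quaternion p, and angle β, setting q_β = (cos β - k sin β) q and p_β = (cos β - k sin β) p, one has q_β* k p_β / (2 q_β* q_β) = q* k p / (2 q* q). -/
open Quaternion

noncomputable def quatK : Quaternion ℝ := ⟨0, 0, 0, 1⟩

/-! Left multiplication by `u = cos β - k sin β` is an isometry (`u* u = 1`) commuting with `k`,
so `u` cancels from both `q_β* k p_β = q* u* k u p` and `q_β* q_β = q* u* u q`. -/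

theorem star_mul_mul_mul_of_star_mul_self_eq_one {R : Type*} [Monoid R] [StarMul R] {u c : R}
    (hu : star u * u = 1) (hc : Commute c u) (q p : R) :
    star (u * q) * c * (u * p) = star q * c * p := by
  calc star (u * q) * c * (u * p) = star q * (star u * (c * u)) * p := by
        simp only [star_mul, mul_assoc]
    _ = star q * c * p := by rw [hc.eq, ← mul_assoc (star u), hu, one_mul]

theorem star_mul_self_cos_sub_sin_smul_quatK (β : ℝ) :
    star ((Real.cos β : Quaternion ℝ) - Real.sin β • quatK)
      * ((Real.cos β : Quaternion ℝ) - Real.sin β • quatK) = 1 := by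
  have hk : quatK.re = 0 ∧ quatK.imI = 0 ∧ quatK.imJ = 0 ∧ quatK.imK = 1 := ⟨rfl, rfl, rfl, rfl⟩
  rw [star_mul_self, normSq_def']
  simp [hk, Real.cos_sq_add_sin_sq]

theorem commute_quatK_cos_sub_sin_smul_quatK (β : ℝ) :
    Commute quatK ((Real.cos β : Quaternion ℝ) - Real.sin β • quatK) :=
  ((coe_commute _ _).symm).sub_right ((Commute.refl _).smul_right _)

theorem ks_full_s1_invariance_general (q p : Quaternion ℝ) (β : ℝ)
    (qβ pβ : Quaternion ℝ)
    (hqβ : qβ = ((Real.cos β : Quaternion ℝ) - Real.sin β • quatK) * q)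
    (hpβ : pβ = ((Real.cos β : Quaternion ℝ) - Real.sin β • quatK) * p) :
    star qβ * quatK * pβ / (2 * (star qβ * qβ))
      = star q * quatK * p / (2 * (star q * q)) := by
  have hu := star_mul_self_cos_sub_sin_smul_quatK β
  have hk : star qβ * quatK * pβ = star q * quatK * p := by
    rw [hqβ, hpβ, star_mul_mul_mul_of_star_mul_self_eq_one hu
      (commute_quatK_cos_sub_sin_smul_quatK β)]
  have hnorm : star qβ * qβ = star q * q := by
    rw [hqβ]
    simpa only [mul_one] using star_mul_mul_mul_of_star_mul_self_eq_one hu (Commute.one_left _) q q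
  rw [hk, hnorm]

/-- The full KS map on cotangent vectors is invariant under the
simultaneous S¹-action: for q ≠ 0, any p, and any β, with
q_β = (cos β - k sin β) q, p_β = (cos β - k sin β) p, one has
q_β* k p_β / (2 q_β* q_β) = q* k p / (2 q* q). -/
theorem ks_full_s1_invariance (q p : Quaternion ℝ) (hq : q ≠ 0) (β : ℝ)
    (qβ pβ : Quaternion ℝ)
    (hqβ : qβ = ((Real.cos β : Quaternion ℝ) - Real.sin β • quatK) * q)
    (hpβ : pβ = ((Real.cos β : Quaternion ℝ) - Real.sin β • quatK) * p) :
    star qβ * quatK * pβ / (2 * (star qβ * qβ))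
      = star q * quatK * p / (2 * (star q * q)) :=
  ks_full_s1_invariance_general q p β qβ pβ hqβ hpβ
end

section
/- Every function in the set τ = {τ₁, τ₂, τ₃} Poisson-commutes with every function in ρ = {ρ₁, ρ₂, ρ₃} and with every function in σ = {σ₁, σ₂, σ₃}. -/
open scoped BigOperators

/-- Partial derivative of f(q,p) with respect to qᵢ. -/
noncomputable def pdQ (f : (Fin 4 → ℝ) → (Fin 4 → ℝ) → ℝ) (i : Fin 4)
    (q p : Fin 4 → ℝ) : ℝ :=
  deriv (fun t => f (Function.update q i t) p) (q i)

/-- Partial derivative of f(q,p) with respect to pᵢ. -/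
noncomputable def pdP (f : (Fin 4 → ℝ) → (Fin 4 → ℝ) → ℝ) (i : Fin 4)
    (q p : Fin 4 → ℝ) : ℝ :=
  deriv (fun t => f q (Function.update p i t)) (p i)

/-- The canonical Poisson bracket
{f,g} = Σᵢ (∂f/∂qᵢ ∂g/∂pᵢ - ∂f/∂pᵢ ∂g/∂qᵢ) on T*ℝ⁴ = ℝ⁴ × ℝ⁴. -/
noncomputable def poisson (f g : (Fin 4 → ℝ) → (Fin 4 → ℝ) → ℝ)
    (q p : Fin 4 → ℝ) : ℝ :=
  ∑ i : Fin 4, (pdQ f i q p * pdP g i q p - pdP f i q p * pdQ g i q p)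

noncomputable def tau1 (q p : Fin 4 → ℝ) : ℝ := ∑ i : Fin 4, q i * p i
noncomputable def tau2 (q p : Fin 4 → ℝ) : ℝ :=
  ((∑ i : Fin 4, q i ^ 2) - ∑ i : Fin 4, p i ^ 2) / 2
noncomputable def tau3 (q p : Fin 4 → ℝ) : ℝ :=
  ((∑ i : Fin 4, q i ^ 2) + ∑ i : Fin 4, p i ^ 2) / 2

noncomputable def rho1 (q p : Fin 4 → ℝ) : ℝ :=
  p 1 * q 0 - p 0 * q 1 + p 3 * q 2 - p 2 * q 3
noncomputable def rho2 (q p : Fin 4 → ℝ) : ℝ :=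
  p 2 * q 0 - p 0 * q 2 + p 3 * q 1 - p 1 * q 3
noncomputable def rho3 (q p : Fin 4 → ℝ) : ℝ :=
  p 0 * q 3 - p 3 * q 0 + p 2 * q 1 - p 1 * q 2

noncomputable def sigma1 (q p : Fin 4 → ℝ) : ℝ :=
  p 0 * q 1 - p 1 * q 0 + p 2 * q 3 - p 3 * q 2
noncomputable def sigma2 (q p : Fin 4 → ℝ) : ℝ :=
  p 0 * q 2 - p 2 * q 0 + p 3 * q 1 - p 1 * q 3
noncomputable def sigma3 (q p : Fin 4 → ℝ) : ℝ :=
  p 0 * q 3 - p 3 * q 0 + p 1 * q 2 - p 2 * q 1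

lemma sum_update (c : Fin 4 → ℝ) (q : Fin 4 → ℝ) (i : Fin 4) (t : ℝ) :
    (∑ j, c j * Function.update q i t j)
      = c i * t + ∑ j ∈ Finset.univ.erase i, c j * q j := by
  rw [← Finset.add_sum_erase _ _ (Finset.mem_univ i), Function.update_self]
  congr 1
  exact Finset.sum_congr rfl fun j hj => by
    rw [Function.update_of_ne (Finset.ne_of_mem_erase hj)]

lemma sum_sq_update (q : Fin 4 → ℝ) (i : Fin 4) (t : ℝ) :
    (∑ j, Function.update q i t j ^ 2)
      = t ^ 2 + ∑ j ∈ Finset.univ.erase i, q j ^ 2 := by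
  rw [← Finset.add_sum_erase _ _ (Finset.mem_univ i), Function.update_self]
  congr 1
  exact Finset.sum_congr rfl fun j hj => by
    rw [Function.update_of_ne (Finset.ne_of_mem_erase hj)]

lemma pdQ_linear (c : (Fin 4 → ℝ) → Fin 4 → ℝ) (i : Fin 4) (q p : Fin 4 → ℝ) :
    pdQ (fun q p => ∑ j, c p j * q j) i q p = c p i := by
  unfold pdQ
  have h : (fun t => ∑ j, c p j * Function.update q i t j)
      = fun t => c p i * t + ∑ j ∈ Finset.univ.erase i, c p j * q j := by
    funext t; exact sum_update _ _ _ _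
  rw [h]
  have H : HasDerivAt (fun t : ℝ => c p i * t + ∑ j ∈ Finset.univ.erase i, c p j * q j)
      (c p i) (q i) := by
    simpa using ((hasDerivAt_id (q i)).const_mul (c p i)).add_const
      (∑ j ∈ Finset.univ.erase i, c p j * q j)
  exact H.deriv

lemma pdP_linear (c : (Fin 4 → ℝ) → Fin 4 → ℝ) (i : Fin 4) (q p : Fin 4 → ℝ) :
    pdP (fun q p => ∑ j, c q j * p j) i q p = c q i := by
  unfold pdP
  have h : (fun t => ∑ j, c q j * Function.update p i t j)
      = fun t => c q i * t + ∑ j ∈ Finset.univ.erase i, c q j * p j := by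
    funext t; exact sum_update _ _ _ _
  rw [h]
  have H : HasDerivAt (fun t : ℝ => c q i * t + ∑ j ∈ Finset.univ.erase i, c q j * p j)
      (c q i) (p i) := by
    simpa using ((hasDerivAt_id (p i)).const_mul (c q i)).add_const
      (∑ j ∈ Finset.univ.erase i, c q j * p j)
  exact H.deriv

lemma pdQ_quad (a : ℝ) (g : (Fin 4 → ℝ) → ℝ) (i : Fin 4) (q p : Fin 4 → ℝ) :
    pdQ (fun q p => a * (∑ j, q j ^ 2) + g p) i q p = 2 * a * q i := by
  unfold pdQ
  have h : (fun t => a * (∑ j, Function.update q i t j ^ 2) + g p)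
      = fun t => a * t ^ 2 + (a * (∑ j ∈ Finset.univ.erase i, q j ^ 2) + g p) := by
    funext t; rw [sum_sq_update]; ring
  rw [h]
  have := (((hasDerivAt_pow 2 (q i)).const_mul a).add_const
    (a * (∑ j ∈ Finset.univ.erase i, q j ^ 2) + g p)).deriv
  rw [this]; ring

lemma pdP_quad (a : ℝ) (g : (Fin 4 → ℝ) → ℝ) (i : Fin 4) (q p : Fin 4 → ℝ) :
    pdP (fun q p => a * (∑ j, p j ^ 2) + g q) i q p = 2 * a * p i := by
  unfold pdP
  have h : (fun t => a * (∑ j, Function.update p i t j ^ 2) + g q)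
      = fun t => a * t ^ 2 + (a * (∑ j ∈ Finset.univ.erase i, p j ^ 2) + g q) := by
    funext t; rw [sum_sq_update]; ring
  rw [h]
  have := (((hasDerivAt_pow 2 (p i)).const_mul a).add_const
    (a * (∑ j ∈ Finset.univ.erase i, p j ^ 2) + g q)).deriv
  rw [this]; ring

lemma pdQ_tau1 (i : Fin 4) (q p : Fin 4 → ℝ) :
    pdQ tau1 i q p = (![p 0, p 1, p 2, p 3] : Fin 4 → ℝ) i := by
  have h : tau1 = fun q p => ∑ j, (![p 0, p 1, p 2, p 3] : Fin 4 → ℝ) j * q j := by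
    funext q p
    simp only [tau1, Fin.sum_univ_four, Matrix.cons_val_zero, Matrix.cons_val_one,
      Matrix.head_cons, Matrix.cons_val_two, Matrix.tail_cons, Matrix.cons_val_three] <;>
      ring
  rw [h]
  exact pdQ_linear (fun p => ![p 0, p 1, p 2, p 3]) i q p


lemma pdP_tau1 (i : Fin 4) (q p : Fin 4 → ℝ) :
    pdP tau1 i q p = (![q 0, q 1, q 2, q 3] : Fin 4 → ℝ) i := by
  have h : tau1 = fun q p => ∑ j, (![q 0, q 1, q 2, q 3] : Fin 4 → ℝ) j * p j := by
    funext q p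
    simp only [tau1, Fin.sum_univ_four, Matrix.cons_val_zero, Matrix.cons_val_one,
      Matrix.head_cons, Matrix.cons_val_two, Matrix.tail_cons, Matrix.cons_val_three] <;>
      ring
  rw [h]
  exact pdP_linear (fun q => ![q 0, q 1, q 2, q 3]) i q p


lemma pdQ_tau2 (i : Fin 4) (q p : Fin 4 → ℝ) :
    pdQ tau2 i q p = q i := by
  have h : tau2 = fun q p => (1/2 : ℝ) * (∑ j, q j ^ 2)
      + (fun p : Fin 4 → ℝ => (-(1/2 : ℝ)) * ∑ j : Fin 4, p j ^ 2) p := by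
    funext q p
    simp only [tau2]
    ring
  rw [h]
  exact (pdQ_quad (1/2 : ℝ) (fun p : Fin 4 → ℝ => (-(1/2 : ℝ)) * ∑ j : Fin 4, p j ^ 2) i q p).trans (by ring)


lemma pdP_tau2 (i : Fin 4) (q p : Fin 4 → ℝ) :
    pdP tau2 i q p = -p i := by
  have h : tau2 = fun q p => (-(1/2) : ℝ) * (∑ j, p j ^ 2)
      + (fun q : Fin 4 → ℝ => ((1/2 : ℝ)) * ∑ j : Fin 4, q j ^ 2) q := by
    funext q p
    simp only [tau2]
    ring
  rw [h]
  exact (pdP_quad (-(1/2) : ℝ) (fun q : Fin 4 → ℝ => ((1/2 : ℝ)) * ∑ j : Fin 4, q j ^ 2) i q p).trans (by ring)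


lemma pdQ_tau3 (i : Fin 4) (q p : Fin 4 → ℝ) :
    pdQ tau3 i q p = q i := by
  have h : tau3 = fun q p => (1/2 : ℝ) * (∑ j, q j ^ 2)
      + (fun p : Fin 4 → ℝ => ((1/2 : ℝ)) * ∑ j : Fin 4, p j ^ 2) p := by
    funext q p
    simp only [tau3]
    ring
  rw [h]
  exact (pdQ_quad (1/2 : ℝ) (fun p : Fin 4 → ℝ => ((1/2 : ℝ)) * ∑ j : Fin 4, p j ^ 2) i q p).trans (by ring)


lemma pdP_tau3 (i : Fin 4) (q p : Fin 4 → ℝ) :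
    pdP tau3 i q p = p i := by
  have h : tau3 = fun q p => (1/2 : ℝ) * (∑ j, p j ^ 2)
      + (fun q : Fin 4 → ℝ => ((1/2 : ℝ)) * ∑ j : Fin 4, q j ^ 2) q := by
    funext q p
    simp only [tau3]
    ring
  rw [h]
  exact (pdP_quad (1/2 : ℝ) (fun q : Fin 4 → ℝ => ((1/2 : ℝ)) * ∑ j : Fin 4, q j ^ 2) i q p).trans (by ring)


lemma pdQ_rho1 (i : Fin 4) (q p : Fin 4 → ℝ) :
    pdQ rho1 i q p = (![p 1, -p 0, p 3, -p 2] : Fin 4 → ℝ) i := by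
  have h : rho1 = fun q p => ∑ j, (![p 1, -p 0, p 3, -p 2] : Fin 4 → ℝ) j * q j := by
    funext q p
    simp only [rho1, Fin.sum_univ_four, Matrix.cons_val_zero, Matrix.cons_val_one,
      Matrix.head_cons, Matrix.cons_val_two, Matrix.tail_cons, Matrix.cons_val_three] <;>
      ring
  rw [h]
  exact pdQ_linear (fun p => ![p 1, -p 0, p 3, -p 2]) i q p


lemma pdP_rho1 (i : Fin 4) (q p : Fin 4 → ℝ) :
    pdP rho1 i q p = (![-q 1, q 0, -q 3, q 2] : Fin 4 → ℝ) i := by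
  have h : rho1 = fun q p => ∑ j, (![-q 1, q 0, -q 3, q 2] : Fin 4 → ℝ) j * p j := by
    funext q p
    simp only [rho1, Fin.sum_univ_four, Matrix.cons_val_zero, Matrix.cons_val_one,
      Matrix.head_cons, Matrix.cons_val_two, Matrix.tail_cons, Matrix.cons_val_three] <;>
      ring
  rw [h]
  exact pdP_linear (fun q => ![-q 1, q 0, -q 3, q 2]) i q p


lemma pdQ_rho2 (i : Fin 4) (q p : Fin 4 → ℝ) :
    pdQ rho2 i q p = (![p 2, p 3, -p 0, -p 1] : Fin 4 → ℝ) i := by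
  have h : rho2 = fun q p => ∑ j, (![p 2, p 3, -p 0, -p 1] : Fin 4 → ℝ) j * q j := by
    funext q p
    simp only [rho2, Fin.sum_univ_four, Matrix.cons_val_zero, Matrix.cons_val_one,
      Matrix.head_cons, Matrix.cons_val_two, Matrix.tail_cons, Matrix.cons_val_three] <;>
      ring
  rw [h]
  exact pdQ_linear (fun p => ![p 2, p 3, -p 0, -p 1]) i q p


lemma pdP_rho2 (i : Fin 4) (q p : Fin 4 → ℝ) :
    pdP rho2 i q p = (![-q 2, -q 3, q 0, q 1] : Fin 4 → ℝ) i := by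
  have h : rho2 = fun q p => ∑ j, (![-q 2, -q 3, q 0, q 1] : Fin 4 → ℝ) j * p j := by
    funext q p
    simp only [rho2, Fin.sum_univ_four, Matrix.cons_val_zero, Matrix.cons_val_one,
      Matrix.head_cons, Matrix.cons_val_two, Matrix.tail_cons, Matrix.cons_val_three] <;>
      ring
  rw [h]
  exact pdP_linear (fun q => ![-q 2, -q 3, q 0, q 1]) i q p


lemma pdQ_rho3 (i : Fin 4) (q p : Fin 4 → ℝ) :
    pdQ rho3 i q p = (![-p 3, p 2, -p 1, p 0] : Fin 4 → ℝ) i := by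
  have h : rho3 = fun q p => ∑ j, (![-p 3, p 2, -p 1, p 0] : Fin 4 → ℝ) j * q j := by
    funext q p
    simp only [rho3, Fin.sum_univ_four, Matrix.cons_val_zero, Matrix.cons_val_one,
      Matrix.head_cons, Matrix.cons_val_two, Matrix.tail_cons, Matrix.cons_val_three] <;>
      ring
  rw [h]
  exact pdQ_linear (fun p => ![-p 3, p 2, -p 1, p 0]) i q p


lemma pdP_rho3 (i : Fin 4) (q p : Fin 4 → ℝ) :
    pdP rho3 i q p = (![q 3, -q 2, q 1, -q 0] : Fin 4 → ℝ) i := by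
  have h : rho3 = fun q p => ∑ j, (![q 3, -q 2, q 1, -q 0] : Fin 4 → ℝ) j * p j := by
    funext q p
    simp only [rho3, Fin.sum_univ_four, Matrix.cons_val_zero, Matrix.cons_val_one,
      Matrix.head_cons, Matrix.cons_val_two, Matrix.tail_cons, Matrix.cons_val_three] <;>
      ring
  rw [h]
  exact pdP_linear (fun q => ![q 3, -q 2, q 1, -q 0]) i q p


lemma pdQ_sigma1 (i : Fin 4) (q p : Fin 4 → ℝ) :
    pdQ sigma1 i q p = (![-p 1, p 0, -p 3, p 2] : Fin 4 → ℝ) i := by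
  have h : sigma1 = fun q p => ∑ j, (![-p 1, p 0, -p 3, p 2] : Fin 4 → ℝ) j * q j := by
    funext q p
    simp only [sigma1, Fin.sum_univ_four, Matrix.cons_val_zero, Matrix.cons_val_one,
      Matrix.head_cons, Matrix.cons_val_two, Matrix.tail_cons, Matrix.cons_val_three] <;>
      ring
  rw [h]
  exact pdQ_linear (fun p => ![-p 1, p 0, -p 3, p 2]) i q p


lemma pdP_sigma1 (i : Fin 4) (q p : Fin 4 → ℝ) :
    pdP sigma1 i q p = (![q 1, -q 0, q 3, -q 2] : Fin 4 → ℝ) i := by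
  have h : sigma1 = fun q p => ∑ j, (![q 1, -q 0, q 3, -q 2] : Fin 4 → ℝ) j * p j := by
    funext q p
    simp only [sigma1, Fin.sum_univ_four, Matrix.cons_val_zero, Matrix.cons_val_one,
      Matrix.head_cons, Matrix.cons_val_two, Matrix.tail_cons, Matrix.cons_val_three] <;>
      ring
  rw [h]
  exact pdP_linear (fun q => ![q 1, -q 0, q 3, -q 2]) i q p


lemma pdQ_sigma2 (i : Fin 4) (q p : Fin 4 → ℝ) :
    pdQ sigma2 i q p = (![-p 2, p 3, p 0, -p 1] : Fin 4 → ℝ) i := by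
  have h : sigma2 = fun q p => ∑ j, (![-p 2, p 3, p 0, -p 1] : Fin 4 → ℝ) j * q j := by
    funext q p
    simp only [sigma2, Fin.sum_univ_four, Matrix.cons_val_zero, Matrix.cons_val_one,
      Matrix.head_cons, Matrix.cons_val_two, Matrix.tail_cons, Matrix.cons_val_three] <;>
      ring
  rw [h]
  exact pdQ_linear (fun p => ![-p 2, p 3, p 0, -p 1]) i q p


lemma pdP_sigma2 (i : Fin 4) (q p : Fin 4 → ℝ) :
    pdP sigma2 i q p = (![q 2, -q 3, -q 0, q 1] : Fin 4 → ℝ) i := by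
  have h : sigma2 = fun q p => ∑ j, (![q 2, -q 3, -q 0, q 1] : Fin 4 → ℝ) j * p j := by
    funext q p
    simp only [sigma2, Fin.sum_univ_four, Matrix.cons_val_zero, Matrix.cons_val_one,
      Matrix.head_cons, Matrix.cons_val_two, Matrix.tail_cons, Matrix.cons_val_three] <;>
      ring
  rw [h]
  exact pdP_linear (fun q => ![q 2, -q 3, -q 0, q 1]) i q p


lemma pdQ_sigma3 (i : Fin 4) (q p : Fin 4 → ℝ) :
    pdQ sigma3 i q p = (![-p 3, -p 2, p 1, p 0] : Fin 4 → ℝ) i := by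
  have h : sigma3 = fun q p => ∑ j, (![-p 3, -p 2, p 1, p 0] : Fin 4 → ℝ) j * q j := by
    funext q p
    simp only [sigma3, Fin.sum_univ_four, Matrix.cons_val_zero, Matrix.cons_val_one,
      Matrix.head_cons, Matrix.cons_val_two, Matrix.tail_cons, Matrix.cons_val_three] <;>
      ring
  rw [h]
  exact pdQ_linear (fun p => ![-p 3, -p 2, p 1, p 0]) i q p


lemma pdP_sigma3 (i : Fin 4) (q p : Fin 4 → ℝ) :
    pdP sigma3 i q p = (![q 3, q 2, -q 1, -q 0] : Fin 4 → ℝ) i := by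
  have h : sigma3 = fun q p => ∑ j, (![q 3, q 2, -q 1, -q 0] : Fin 4 → ℝ) j * p j := by
    funext q p
    simp only [sigma3, Fin.sum_univ_four, Matrix.cons_val_zero, Matrix.cons_val_one,
      Matrix.head_cons, Matrix.cons_val_two, Matrix.tail_cons, Matrix.cons_val_three] <;>
      ring
  rw [h]
  exact pdP_linear (fun q => ![q 3, q 2, -q 1, -q 0]) i q p


/-- Every function in τ = {τ₁,τ₂,τ₃} Poisson-commutes with
every function in ρ = {ρ₁,ρ₂,ρ₃} and with every function in σ = {σ₁,σ₂,σ₃}. -/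
theorem tau_commutes_with_rho_sigma :
    ∀ i j : Fin 3, ∀ q p : Fin 4 → ℝ,
      poisson (![tau1, tau2, tau3] i) (![rho1, rho2, rho3] j) q p = 0 ∧
      poisson (![tau1, tau2, tau3] i) (![sigma1, sigma2, sigma3] j) q p = 0 := by
  intro i j q p
  fin_cases i <;> fin_cases j <;>
    refine ⟨?_, ?_⟩ <;>
    simp [poisson, Fin.sum_univ_four, Matrix.cons_val_zero, Matrix.cons_val_one,
        Matrix.head_cons, Matrix.cons_val_two, Matrix.tail_cons, Matrix.cons_val_three,
        pdQ_tau1, pdP_tau1, pdQ_tau2, pdP_tau2, pdQ_tau3, pdP_tau3,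
        pdQ_rho1, pdP_rho1, pdQ_rho2, pdP_rho2, pdQ_rho3, pdP_rho3,
        pdQ_sigma1, pdP_sigma1, pdQ_sigma2, pdP_sigma2, pdQ_sigma3, pdP_sigma3] <;>
    ring
end
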